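/- arXiv:0802.4068 — 4 statements merged into one kernel-verified Lean document; each statement's English description precedes it below -/
import Mathlib

section
/- Let R be a commutative ring, A a commutative R-algebra, and ε : A → R an R-linear map. Suppose (u_i, v_i), i = 1,…,r, is a finite family of pairs of elements of A such that ∑_{i=1}^r u_i ⊗ v_i = ∑_{i=1}^r v_i ⊗ u_i in A ⊗_R A and such that for every a ∈ A one has a = ∑_{i=1}^r ε(a·u_i)·v_i. Then for every a ∈ A one also has a = ∑_{i=1}^r ε(a·v_i)·u_i. -/
open TensorProduct

/-- If `(u i, v i)` satisfies the symmetry condition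
`∑ u i ⊗ v i = ∑ v i ⊗ u i` in `A ⊗[R] A` and the counit condition
`a = ∑ ε (a * u i) • v i` for all `a`, then also `a = ∑ ε (a * v i) • u i`. -/
theorem frobenius_counit_symmetric
    (R A : Type*) [CommRing R] [CommRing A] [Algebra R A]
    (ε : A →ₗ[R] R) (r : ℕ) (u v : Fin r → A)
    (hsym : ∑ i, u i ⊗ₜ[R] v i = ∑ i, v i ⊗ₜ[R] u i)
    (hcounit : ∀ a : A, a = ∑ i, ε (a * u i) • v i) :
    ∀ a : A, a = ∑ i, ε (a * v i) • u i := by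
  intro a
  let f : A ⊗[R] A →ₗ[R] A :=
    TensorProduct.lift ((LinearMap.lsmul R A) ∘ₗ ε ∘ₗ (LinearMap.mulLeft R a))
  have := congrArg f hsym
  simp only [map_sum, f, TensorProduct.lift.tmul, LinearMap.comp_apply,
    LinearMap.mulLeft_apply, LinearMap.lsmul_apply] at this
  rw [← this]
  exact hcounit a
end

section
/- Let R be a commutative ring, A a commutative R-algebra, ε : A → R an R-linear map, and (u_i, v_i), i = 1,…,r, a Frobenius system, i.e. a finite family of pairs in A × A with ∑_i u_i ⊗ v_i = ∑_i v_i ⊗ u_i in A ⊗_R A and, for every a ∈ A, a = ∑_i ε(a·u_i)·v_i = ∑_i ε(a·v_i)·u_i. Let w_1,…,w_s ∈ A and λ_{ij} ∈ R (1 ≤ i ≤ r, 1 ≤ j ≤ s) satisfy v_i = ∑_{j=1}^s λ_{ij}·w_j for every i, and set z_j := ∑_{i=1}^r λ_{ij}·u_i. Then (z_j, w_j), j = 1,…,s, is again a Frobenius system with the same counit ε: ∑_j z_j ⊗ w_j = ∑_j w_j ⊗ z_j in A ⊗_R A, and for every a ∈ A, a = ∑_j ε(a·z_j)·w_j = ∑_j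 ε(a·w_j)·z_j. -/
open TensorProduct

/-- Remark 2.1(a): If `(u i, v i)` is a Frobenius system with counit
`ε`, the `w j` satisfy `v i = ∑ j, λ i j • w j`, and `z j := ∑ i, λ i j • u i`,
then `(z j, w j)` is again a Frobenius system with counit `ε`. -/
theorem frobenius_system_change_of_generators
    (R A : Type*) [CommRing R] [CommRing A] [Algebra R A]
    (ε : A →ₗ[R] R) (r s : ℕ) (u v : Fin r → A)
    (hsym : ∑ i, u i ⊗ₜ[R] v i = ∑ i, v i ⊗ₜ[R] u i)
    (hcounit₁ : ∀ a : A, a = ∑ i, ε (a * u i) • v i)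
    (hcounit₂ : ∀ a : A, a = ∑ i, ε (a * v i) • u i)
    (w : Fin s → A) (lam : Fin r → Fin s → R)
    (hv : ∀ i, v i = ∑ j, lam i j • w j)
    (z : Fin s → A) (hz : ∀ j, z j = ∑ i, lam i j • u i) :
    (∑ j, z j ⊗ₜ[R] w j = ∑ j, w j ⊗ₜ[R] z j) ∧
      (∀ a : A, a = ∑ j, ε (a * z j) • w j) ∧
      (∀ a : A, a = ∑ j, ε (a * w j) • z j) := by
  refine ⟨?_, ?_, ?_⟩
  · calc ∑ j, z j ⊗ₜ[R] w j
        = ∑ j, ∑ i, lam i j • (u i ⊗ₜ[R] w j) := by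
          simp [hz, sum_tmul, smul_tmul']
    _ = ∑ i, u i ⊗ₜ[R] v i := by
          rw [Finset.sum_comm]; simp [hv, tmul_sum, tmul_smul]
    _ = ∑ i, v i ⊗ₜ[R] u i := hsym
    _ = ∑ j, ∑ i, lam i j • (w j ⊗ₜ[R] u i) := by
          rw [Finset.sum_comm]; simp [hv, sum_tmul, smul_tmul']
    _ = ∑ j, w j ⊗ₜ[R] z j := by
          simp [hz, tmul_sum, tmul_smul]
  · intro a
    calc a = ∑ i, ε (a * u i) • v i := hcounit₁ a
    _ = ∑ i, ∑ j, (lam i j * ε (a * u i)) • w j := by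
          simp [hv, Finset.smul_sum, smul_smul, mul_comm]
    _ = ∑ j, ε (a * z j) • w j := by
          rw [Finset.sum_comm]
          simp [hz, Finset.mul_sum, Finset.sum_smul, smul_smul,
            mul_comm, Algebra.mul_smul_comm]
  · intro a
    calc a = ∑ i, ε (a * v i) • u i := hcounit₂ a
    _ = ∑ i, ∑ j, (lam i j * ε (a * w j)) • u i := by
          simp [hv, Finset.mul_sum, Finset.sum_smul, smul_smul,
            Algebra.mul_smul_comm]
    _ = ∑ j, ε (a * w j) • z j := by
          rw [Finset.sum_comm]
          simp [hz, Finset.smul_sum, smul_smul, mul_comm]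
end

section
/- Let R be a commutative ring, A a commutative R-algebra, ε : A → R an R-linear map, and (u_i, v_i), i = 1,…,r, a Frobenius system, i.e. a finite family of pairs in A × A with ∑_i u_i ⊗ v_i = ∑_i v_i ⊗ u_i in A ⊗_R A and, for every a ∈ A, a = ∑_i ε(a·u_i)·v_i = ∑_i ε(a·v_i)·u_i. Then the R-linear map Φ : A ⊗_R A → Hom_R(A, A) determined on pure tensors by Φ(a ⊗ b)(x) = ε(x·a)·b is injective. -/
open TensorProduct

/-- For a Frobenius system `(u i, v i)` with counit `ε`, the
`R`-linear map `Φ : A ⊗[R] A → Hom_R(A, A)` determined on pure tensors by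
`Φ (a ⊗ b) x = ε (x * a) • b` is injective. -/
theorem frobenius_tensor_to_hom_injective
    (R A : Type*) [CommRing R] [CommRing A] [Algebra R A]
    (ε : A →ₗ[R] R) (r : ℕ) (u v : Fin r → A)
    (hsym : ∑ i, u i ⊗ₜ[R] v i = ∑ i, v i ⊗ₜ[R] u i)
    (hcounit₁ : ∀ a : A, a = ∑ i, ε (a * u i) • v i)
    (hcounit₂ : ∀ a : A, a = ∑ i, ε (a * v i) • u i)
    (Φ : A ⊗[R] A →ₗ[R] (A →ₗ[R] A))
    (hΦ : ∀ a b x : A, Φ (a ⊗ₜ[R] b) x = ε (x * a) • b) :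
    Function.Injective Φ := by
  have key : ∀ x : A ⊗[R] A, ∑ i, u i ⊗ₜ[R] (Φ x) (v i) = x := by
    intro x
    induction x using TensorProduct.induction_on with
    | zero => simp
    | tmul a b =>
        have : ∀ i, u i ⊗ₜ[R] (Φ (a ⊗ₜ[R] b)) (v i)
            = (ε (a * v i) • u i) ⊗ₜ[R] b := by
          intro i
          rw [hΦ, tmul_smul, smul_tmul', mul_comm]
        rw [Finset.sum_congr rfl (fun i _ => this i), ← sum_tmul, ← hcounit₂ a]
    | add x y hx hy =>
        simp only [map_add, LinearMap.add_apply, tmul_add,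
          Finset.sum_add_distrib, hx, hy]
  intro x y hxy
  rw [← key x, ← key y, hxy]
end

section
/- Let R be a commutative ring, A a commutative R-algebra, ε : A → R an R-linear map, and (u_i, v_i), i = 1,…,r, a Frobenius system, i.e. a finite family of pairs in A × A with ∑_i u_i ⊗ v_i = ∑_i v_i ⊗ u_i in A ⊗_R A and, for every a ∈ A, a = ∑_i ε(a·u_i)·v_i = ∑_i ε(a·v_i)·u_i. Then the R-linear map Φ : A ⊗_R A ⊗_R A → Hom_R(A, Hom_R(A, A)) determined on pure tensors by Φ(a ⊗ b ⊗ c)(x)(y) = (ε(x·a)·ε(y·b))·c is injective. Equivalently, if elements a_k, b_k, c_k ∈ A (k = 1,…,N) satisfy ∑_{k=1}^N ε(x·a_k)·ε(y·b_k)·c_k = 0 for all x, y ∈ A, then ∑_{k=1}^N a_k ⊗ b_k ⊗ c_k = 0 in A ⊗_R A ⊗_R A. -/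
open TensorProduct

/-- For a Frobenius system `(u i, v i)` with counit `ε`, the
`R`-linear map `Φ : A ⊗[R] A ⊗[R] A → Hom_R(A, Hom_R(A, A))` determined on pure
tensors by `Φ (a ⊗ b ⊗ c) x y = (ε (x * a) * ε (y * b)) • c` is injective.
Equivalently, if `∑ k, (ε (x * a k) * ε (y * b k)) • c k = 0` for all `x y`,
then `∑ k, a k ⊗ b k ⊗ c k = 0`. -/
theorem frobenius_triple_tensor_to_hom_injective
    (R A : Type*) [CommRing R] [CommRing A] [Algebra R A]
    (ε : A →ₗ[R] R) (r : ℕ) (u v : Fin r → A)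
    (hsym : ∑ i, u i ⊗ₜ[R] v i = ∑ i, v i ⊗ₜ[R] u i)
    (hcounit₁ : ∀ a : A, a = ∑ i, ε (a * u i) • v i)
    (hcounit₂ : ∀ a : A, a = ∑ i, ε (a * v i) • u i)
    (Φ : A ⊗[R] (A ⊗[R] A) →ₗ[R] (A →ₗ[R] (A →ₗ[R] A)))
    (hΦ : ∀ a b c x y : A, Φ (a ⊗ₜ[R] (b ⊗ₜ[R] c)) x y = (ε (x * a) * ε (y * b)) • c) :
    Function.Injective Φ ∧
      ∀ (N : ℕ) (a b c : Fin N → A),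
        (∀ x y : A, ∑ k, (ε (x * a k) * ε (y * b k)) • c k = 0) →
          ∑ k, a k ⊗ₜ[R] (b k ⊗ₜ[R] c k) = 0 := by
  have key : ∀ t : A ⊗[R] (A ⊗[R] A),
      (∑ i, ∑ j, u i ⊗ₜ[R] (u j ⊗ₜ[R] (Φ t (v i) (v j)))) = t := by
    intro t
    induction t using TensorProduct.induction_on with
    | zero => simp
    | add x y hx hy =>
        simp only [map_add, LinearMap.add_apply, tmul_add, Finset.sum_add_distrib, hx, hy]
    | tmul a bc =>
        induction bc using TensorProduct.induction_on with
        | zero => simp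
        | add x y hx hy =>
            simp only [tmul_add, map_add, LinearMap.add_apply,
              Finset.sum_add_distrib] at hx hy ⊢
            rw [hx, hy]
        | tmul b c =>
            simp only [hΦ]
            conv_rhs => rw [hcounit₂ a, hcounit₂ b]
            rw [sum_tmul]
            refine Finset.sum_congr rfl fun i _ => ?_
            rw [← smul_tmul', sum_tmul, tmul_sum, Finset.smul_sum]
            refine Finset.sum_congr rfl fun j _ => ?_
            simp only [smul_tmul, tmul_smul, smul_smul]
            rw [mul_comm (v i) a, mul_comm (v j) b]
  have hinj : Function.Injective Φ := by
    intro s t h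
    rw [← key s, ← key t, h]
  refine ⟨hinj, fun N a b c h => ?_⟩
  apply hinj
  rw [map_zero]
  ext x y
  simp only [map_sum, LinearMap.sum_apply, hΦ, h, LinearMap.zero_apply]
end
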